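/- Finite model property of minimal logic: For every L-formula φ, MPC ⊢ φ if and only if φ is valid on every finite N-frame F that validates the axiom schema (ψ → ¬ψ) → ¬ψ (i.e., F ⊨ (ψ → ¬ψ) → ¬ψ for every L-formula ψ). In particular, if MPC ⊬ φ then there is a finite N-frame validating all theorems of MPC on which φ fails. -/

import Mathlib

inductive Form : Type
  | var : ℕ → Form
  | top : Form
  | and : Form → Form → Form
  | or : Form → Form → Form
  | imp : Form → Form → Form
  | neg : Form → Form

def IsUpset {W : Type*} (le : W → W → Prop) (X : Set W) : Prop :=
  ∀ ⦃w v : W⦄, le w v → w ∈ X → v ∈ X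

def Sat {W : Type*} (le : W → W → Prop) (N : Set W → Set W) (V : ℕ → Set W) : Form → Set W
  | .var p => V p
  | .top => Set.univ
  | .and φ ψ => Sat le N V φ ∩ Sat le N V ψ
  | .or φ ψ => Sat le N V φ ∪ Sat le N V ψ
  | .imp φ ψ => {w | ∀ v, le w v → v ∈ Sat le N V φ → v ∈ Sat le N V ψ}
  | .neg φ => N (Sat le N V φ)

def ValidOn {W : Type*} (le : W → W → Prop) (N : Set W → Set W) (φ : Form) : Prop :=
  ∀ V : ℕ → Set W, (∀ p, IsUpset le (V p)) → ∀ w, w ∈ Sat le N V φ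

def Form.iff (φ ψ : Form) : Form := (φ.imp ψ).and (ψ.imp φ)

inductive Deriv (Ax : Form → Prop) : Form → Prop
  | ax : ∀ {φ : Form}, Ax φ → Deriv Ax φ
  | imp1 : ∀ φ ψ : Form, Deriv Ax (φ.imp (ψ.imp φ))
  | imp2 : ∀ φ ψ χ : Form, Deriv Ax ((φ.imp (ψ.imp χ)).imp ((φ.imp ψ).imp (φ.imp χ)))
  | topI : Deriv Ax Form.top
  | andE1 : ∀ φ ψ : Form, Deriv Ax ((φ.and ψ).imp φ)
  | andE2 : ∀ φ ψ : Form, Deriv Ax ((φ.and ψ).imp ψ)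
  | andI : ∀ φ ψ : Form, Deriv Ax (φ.imp (ψ.imp (φ.and ψ)))
  | orI1 : ∀ φ ψ : Form, Deriv Ax (φ.imp (φ.or ψ))
  | orI2 : ∀ φ ψ : Form, Deriv Ax (ψ.imp (φ.or ψ))
  | orE : ∀ φ ψ χ : Form, Deriv Ax ((φ.imp χ).imp ((ψ.imp χ).imp ((φ.or ψ).imp χ)))
  | negAx : ∀ φ ψ : Form, Deriv Ax ((Form.iff φ ψ).imp (Form.iff φ.neg ψ.neg))
  | mp : ∀ {φ ψ : Form}, Deriv Ax (φ.imp ψ) → Deriv Ax φ → Deriv Ax ψ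

def NThm : Form → Prop := Deriv fun _ => False

def NeFThm : Form → Prop := Deriv fun χ => ∃ φ ψ : Form, χ = (φ.and φ.neg).imp ψ.neg

def CoPCThm : Form → Prop := Deriv fun χ => ∃ φ ψ : Form, χ = (φ.imp ψ).imp (ψ.neg.imp φ.neg)

def MPCThm : Form → Prop := Deriv fun χ => ∃ φ : Form, χ = (φ.imp φ.neg).imp φ.neg

/-!
Soundness is the usual induction on derivations; the locality condition
`N X ∩ Y = N (X ∩ Y) ∩ Y`, applied with `Y` the principal upset of a world, is what validates
`(φ ↔ ψ) → (¬φ ↔ ¬ψ)`.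

Completeness goes through a finite canonical model for a non-theorem `φ`: its worlds are the prime
theories contained in the finite set of subformulas of `φ` and `¬⊤`, ordered by inclusion. In MPC
`¬ψ` is equivalent to `ψ → ¬⊤`, so negation can be interpreted by
`N X = {Γ | every Δ ⊇ Γ lying in X contains ¬⊤}`; this `N` is local and validates
`(ψ → ¬ψ) → ¬ψ` on its own, and the truth lemma makes `φ` fail at a prime theory avoiding it.
-/

deriving instance DecidableEq for Form

namespace Deriv

variable {Ax : Form → Prop} {φ ψ : Form}

theorem mono {Ax' : Form → Prop} (hAx : ∀ χ, Ax χ → Ax' χ) (h : Deriv Ax φ) : Deriv Ax' φ := by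
  induction h with
  | ax hχ => exact .ax (hAx _ hχ)
  | imp1 a b => exact .imp1 a b
  | imp2 a b c => exact .imp2 a b c
  | topI => exact .topI
  | andE1 a b => exact .andE1 a b
  | andE2 a b => exact .andE2 a b
  | andI a b => exact .andI a b
  | orI1 a b => exact .orI1 a b
  | orI2 a b => exact .orI2 a b
  | orE a b c => exact .orE a b c
  | negAx a b => exact .negAx a b
  | mp _ _ ih₁ ih₂ => exact .mp ih₁ ih₂

theorem imp_self (φ : Form) : Deriv Ax (φ.imp φ) :=
  .mp (.mp (.imp2 φ (φ.imp φ) φ) (.imp1 φ (φ.imp φ))) (.imp1 φ φ)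

theorem imp_intro (ψ : Form) (h : Deriv Ax φ) : Deriv Ax (ψ.imp φ) :=
  .mp (.imp1 φ ψ) h

theorem iff_top (h : Deriv Ax φ) : Deriv Ax (φ.iff .top) :=
  .mp (.mp (.andI _ _) (imp_intro φ .topI)) (imp_intro .top h)

theorem neg_iff_neg_top (h : Deriv Ax φ) : Deriv Ax (φ.neg.iff Form.top.neg) :=
  .mp (.negAx φ .top) (iff_top h)

theorem neg_top_of_neg (h : Deriv Ax φ) (hn : Deriv Ax φ.neg) : Deriv Ax Form.top.neg :=
  .mp (.mp (.andE1 _ _) (neg_iff_neg_top h)) hn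

theorem neg_of_neg_top (h : Deriv Ax φ) (ht : Deriv Ax Form.top.neg) : Deriv Ax φ.neg :=
  .mp (.mp (.andE2 _ _) (neg_iff_neg_top h)) ht

end Deriv

def Derives (Ax : Form → Prop) (Γ : Set Form) (φ : Form) : Prop :=
  Deriv (fun χ => Ax χ ∨ χ ∈ Γ) φ

namespace Derives

variable {Ax : Form → Prop} {Γ : Set Form} {φ ψ : Form}

theorem of_mem (h : φ ∈ Γ) : Derives Ax Γ φ := .ax (.inr h)

theorem deduction (h : Derives Ax (insert ψ Γ) φ) : Derives Ax Γ (ψ.imp φ) := by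
  induction h with
  | @ax χ hχ =>
    rcases hχ with hχ | rfl | hχ
    · exact .imp_intro ψ (.ax (.inl hχ))
    · exact .imp_self χ
    · exact .imp_intro ψ (.ax (.inr hχ))
  | imp1 a b => exact .imp_intro ψ (.imp1 a b)
  | imp2 a b c => exact .imp_intro ψ (.imp2 a b c)
  | topI => exact .imp_intro ψ .topI
  | andE1 a b => exact .imp_intro ψ (.andE1 a b)
  | andE2 a b => exact .imp_intro ψ (.andE2 a b)
  | andI a b => exact .imp_intro ψ (.andI a b)
  | orI1 a b => exact .imp_intro ψ (.orI1 a b)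
  | orI2 a b => exact .imp_intro ψ (.orI2 a b)
  | orE a b c => exact .imp_intro ψ (.orE a b c)
  | negAx a b => exact .imp_intro ψ (.negAx a b)
  | @mp a b _ _ ih₁ ih₂ => exact .mp (.mp (.imp2 ψ a b) ih₁) ih₂

theorem cut (hψ : Derives Ax Γ ψ) (h : Derives Ax (insert ψ Γ) φ) : Derives Ax Γ φ :=
  .mp h.deduction hψ

theorem empty_iff : Derives Ax ∅ φ ↔ Deriv Ax φ :=
  ⟨Deriv.mono fun _ h => h.resolve_right (Set.notMem_empty _), Deriv.mono fun _ => .inl⟩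

end Derives

def MPCAx (χ : Form) : Prop := ∃ φ : Form, χ = (φ.imp φ.neg).imp φ.neg

theorem Derives.neg_of_imp_neg_top {Γ : Set Form} {φ : Form}
    (h : Derives MPCAx (insert φ Γ) Form.top.neg) : Derives MPCAx Γ φ.neg :=
  have hself : Derives MPCAx Γ (φ.imp φ.neg) :=
    deduction (Deriv.neg_of_neg_top (of_mem (Set.mem_insert φ Γ)) h)
  .mp (.ax (.inl ⟨φ, rfl⟩)) hself

section Semantics

variable {W : Type*} {le : W → W → Prop} {N : Set W → Set W}

theorem isUpset_sat (htrans : ∀ a b c, le a b → le b c → le a c)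
    (hN : ∀ X, IsUpset le X → IsUpset le (N X)) {V : ℕ → Set W} (hV : ∀ p, IsUpset le (V p))
    (φ : Form) : IsUpset le (Sat le N V φ) := by
  induction φ with
  | var p => exact hV p
  | top => exact fun _ _ _ _ => trivial
  | and a b iha ihb => exact fun w v hwv hw => ⟨iha hwv hw.1, ihb hwv hw.2⟩
  | or a b iha ihb => exact fun w v hwv hw => hw.imp (iha hwv) (ihb hwv)
  | imp a b => exact fun w v hwv hw u hvu => hw u (htrans _ _ _ hwv hvu)
  | neg a iha => exact hN _ iha

theorem neg_inter_eq_of_inter_eq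
    (hloc : ∀ X Y, IsUpset le X → IsUpset le Y → N X ∩ Y = N (X ∩ Y) ∩ Y) {X X' Y : Set W}
    (hX : IsUpset le X) (hX' : IsUpset le X') (hY : IsUpset le Y) (h : X ∩ Y = X' ∩ Y) :
    N X ∩ Y = N X' ∩ Y := by
  rw [hloc X Y hX hY, hloc X' Y hX' hY, h]

theorem Deriv.validOn {Ax : Form → Prop} (hrefl : ∀ w, le w w)
    (htrans : ∀ a b c, le a b → le b c → le a c) (hN : ∀ X, IsUpset le X → IsUpset le (N X))
    (hloc : ∀ X Y, IsUpset le X → IsUpset le Y → N X ∩ Y = N (X ∩ Y) ∩ Y)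
    (hAx : ∀ ψ, Ax ψ → ValidOn le N ψ) {φ : Form} (h : Deriv Ax φ) : ValidOn le N φ := by
  induction h with
  | ax hψ => exact hAx _ hψ
  | imp1 a b => exact fun V hV _ v _ hv u hvu _ => isUpset_sat htrans hN hV a hvu hv
  | imp2 a b c =>
    exact fun V hV _ v _ hv u hvu hu t hut ht =>
      hv t (htrans _ _ _ hvu hut) ht t (hrefl t) (hu t hut ht)
  | topI => exact fun _ _ _ => trivial
  | andE1 a b => exact fun _ _ _ _ _ hv => hv.1
  | andE2 a b => exact fun _ _ _ _ _ hv => hv.2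
  | andI a b => exact fun V hV _ v _ hv u hvu hu => ⟨isUpset_sat htrans hN hV a hvu hv, hu⟩
  | orI1 a b => exact fun _ _ _ _ _ hv => .inl hv
  | orI2 a b => exact fun _ _ _ _ _ hv => .inr hv
  | orE a b c =>
    exact fun _ _ _ v _ hv u hvu hu t hut ht =>
      ht.elim (hv t (htrans _ _ _ hvu hut)) (hu t hut)
  | negAx a b =>
    intro V hV w v _ hv
    have hY : IsUpset le {x | le v x} := fun x y hxy hx => htrans _ _ _ hx hxy
    have hneg := neg_inter_eq_of_inter_eq hloc (isUpset_sat htrans hN hV a)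
      (isUpset_sat htrans hN hV b) hY <| Set.ext fun x =>
        ⟨fun ⟨hxa, hvx⟩ => ⟨hv.1 x hvx hxa, hvx⟩, fun ⟨hxb, hvx⟩ => ⟨hv.2 x hvx hxb, hvx⟩⟩
    exact ⟨fun u hvu hu => ((Set.ext_iff.1 hneg u).1 ⟨hu, hvu⟩).1,
      fun u hvu hu => ((Set.ext_iff.1 hneg u).2 ⟨hu, hvu⟩).1⟩
  | mp _ _ ih₁ ih₂ => exact fun V hV w => ih₁ V hV w w (hrefl w) (ih₂ V hV w)

theorem MPCThm.validOn (hrefl : ∀ w, le w w) (htrans : ∀ a b c, le a b → le b c → le a c)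
    (hN : ∀ X, IsUpset le X → IsUpset le (N X))
    (hloc : ∀ X Y, IsUpset le X → IsUpset le Y → N X ∩ Y = N (X ∩ Y) ∩ Y)
    (hschema : ∀ ψ : Form, ValidOn le N ((ψ.imp ψ.neg).imp ψ.neg)) {φ : Form} (h : MPCThm φ) :
    ValidOn le N φ :=
  Deriv.validOn hrefl htrans hN hloc (by rintro _ ⟨ψ, rfl⟩; exact hschema ψ) h

end Semantics

namespace Form

def subformulas : Form → Finset Form
  | var p => {var p}
  | top => {top}
  | and a b => insert (a.and b) (a.subformulas ∪ b.subformulas)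
  | or a b => insert (a.or b) (a.subformulas ∪ b.subformulas)
  | imp a b => insert (a.imp b) (a.subformulas ∪ b.subformulas)
  | neg a => insert a.neg a.subformulas

@[simp]
theorem mem_subformulas_self (φ : Form) : φ ∈ φ.subformulas := by
  cases φ <;> simp [subformulas]

theorem subformulas_subset_of_mem {φ ψ : Form} (h : ψ ∈ φ.subformulas) :
    ψ.subformulas ⊆ φ.subformulas := by
  induction φ with
  | var | top => simp_all [subformulas]
  | and a b iha ihb | or a b iha ihb | imp a b iha ihb =>
    simp only [subformulas, Finset.mem_insert, Finset.mem_union] at h ⊢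
    rcases h with rfl | h | h
    · exact subset_rfl
    · exact (iha h).trans (Finset.subset_union_left.trans (Finset.subset_insert _ _))
    · exact (ihb h).trans (Finset.subset_union_right.trans (Finset.subset_insert _ _))
  | neg a ih =>
    simp only [subformulas, Finset.mem_insert] at h ⊢
    rcases h with rfl | h
    · exact subset_rfl
    · exact (ih h).trans (Finset.subset_insert _ _)

def negTopClosure (φ : Form) : Finset Form := φ.subformulas ∪ top.neg.subformulas

theorem mem_negTopClosure_self (φ : Form) : φ ∈ φ.negTopClosure :=
  Finset.mem_union_left _ φ.mem_subformulas_self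

theorem neg_top_mem_negTopClosure (φ : Form) : top.neg ∈ φ.negTopClosure :=
  Finset.mem_union_right _ top.neg.mem_subformulas_self

theorem top_mem_negTopClosure (φ : Form) : top ∈ φ.negTopClosure :=
  Finset.mem_union_right _ (by simp [subformulas])

theorem subformulas_subset_negTopClosure {φ ψ : Form} (h : ψ ∈ φ.negTopClosure) :
    ψ.subformulas ⊆ φ.negTopClosure := by
  rcases Finset.mem_union.1 h with h | h
  · exact (subformulas_subset_of_mem h).trans Finset.subset_union_left
  · exact (subformulas_subset_of_mem h).trans Finset.subset_union_right

variable {φ a b : Form}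

theorem mem_negTopClosure_of_and (h : a.and b ∈ φ.negTopClosure) :
    a ∈ φ.negTopClosure ∧ b ∈ φ.negTopClosure :=
  ⟨subformulas_subset_negTopClosure h (by simp [subformulas]),
    subformulas_subset_negTopClosure h (by simp [subformulas])⟩

theorem mem_negTopClosure_of_or (h : a.or b ∈ φ.negTopClosure) :
    a ∈ φ.negTopClosure ∧ b ∈ φ.negTopClosure :=
  ⟨subformulas_subset_negTopClosure h (by simp [subformulas]),
    subformulas_subset_negTopClosure h (by simp [subformulas])⟩

theorem mem_negTopClosure_of_imp (h : a.imp b ∈ φ.negTopClosure) :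
    a ∈ φ.negTopClosure ∧ b ∈ φ.negTopClosure :=
  ⟨subformulas_subset_negTopClosure h (by simp [subformulas]),
    subformulas_subset_negTopClosure h (by simp [subformulas])⟩

theorem mem_negTopClosure_of_neg (h : a.neg ∈ φ.negTopClosure) : a ∈ φ.negTopClosure :=
  subformulas_subset_negTopClosure h (by simp [subformulas])

end Form

open Form

structure IsPrimeTheory (φ : Form) (Γ : Finset Form) : Prop where
  subset : Γ ⊆ φ.negTopClosure
  mem_of_derives : ∀ ψ ∈ φ.negTopClosure, Derives MPCAx Γ ψ → ψ ∈ Γ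
  mem_or_mem : ∀ a b, a.or b ∈ Γ → a ∈ Γ ∨ b ∈ Γ

def CanonicalWorld (φ : Form) : Type := {Γ : Finset Form // IsPrimeTheory φ Γ}

instance (φ : Form) : Finite (CanonicalWorld φ) :=
  Set.Finite.to_subtype <| φ.negTopClosure.powerset.finite_toSet.subset
    fun _ hΓ => Finset.mem_powerset.2 hΓ.subset

section Canonical

variable {φ : Form}

def canonicalLe (Γ Δ : CanonicalWorld φ) : Prop := Γ.1 ⊆ Δ.1

def canonicalNeg (X : Set (CanonicalWorld φ)) : Set (CanonicalWorld φ) :=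
  {Γ | ∀ Δ, canonicalLe Γ Δ → Δ ∈ X → top.neg ∈ Δ.1}

def canonicalVal (p : ℕ) : Set (CanonicalWorld φ) := {Γ | var p ∈ Γ.1}

theorem canonicalLe_refl : ∀ Γ : CanonicalWorld φ, canonicalLe Γ Γ :=
  fun _ => subset_rfl

theorem canonicalLe_trans :
    ∀ Γ Δ Θ : CanonicalWorld φ, canonicalLe Γ Δ → canonicalLe Δ Θ → canonicalLe Γ Θ :=
  fun _ _ _ => Finset.Subset.trans

theorem canonicalLe_antisymm :
    ∀ Γ Δ : CanonicalWorld φ, canonicalLe Γ Δ → canonicalLe Δ Γ → Γ = Δ :=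
  fun _ _ h h' => Subtype.ext (h.antisymm h')

theorem isUpset_canonicalNeg (X : Set (CanonicalWorld φ)) :
    IsUpset canonicalLe (canonicalNeg X) :=
  fun _ _ hΓΔ hΓ Θ hΔΘ => hΓ Θ (hΓΔ.trans hΔΘ)

theorem canonicalNeg_inter (X Y : Set (CanonicalWorld φ)) (hY : IsUpset canonicalLe Y) :
    canonicalNeg X ∩ Y = canonicalNeg (X ∩ Y) ∩ Y := by
  ext Γ
  exact ⟨fun ⟨hΓ, hΓY⟩ => ⟨fun Δ hΓΔ hΔ => hΓ Δ hΓΔ hΔ.1, hΓY⟩,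
    fun ⟨hΓ, hΓY⟩ => ⟨fun Δ hΓΔ hΔ => hΓ Δ hΓΔ ⟨hΔ, hY hΓΔ hΓY⟩, hΓY⟩⟩

theorem validOn_canonical_mpcAx (ψ : Form) :
    ValidOn (canonicalLe (φ := φ)) canonicalNeg ((ψ.imp ψ.neg).imp ψ.neg) :=
  fun _ _ _ _ _ hΓ Δ hΓΔ hΔ => hΓ Δ hΓΔ hΔ Δ subset_rfl hΔ

/-- Lindenbaum's lemma inside the closure: a maximal extension of `Γ` not deriving `χ` is a prime
theory. -/
theorem derives_of_forall_canonicalWorld {Γ : Finset Form} (hΓ : Γ ⊆ φ.negTopClosure)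
    {χ : Form} (h : ∀ Δ : CanonicalWorld φ, Γ ⊆ Δ.1 → χ ∈ Δ.1) : Derives MPCAx Γ χ := by
  classical
  by_contra hχ
  let S := φ.negTopClosure.powerset.filter fun Δ => Γ ⊆ Δ ∧ ¬ Derives MPCAx Δ χ
  obtain ⟨Δ, hΔS, hmax⟩ := S.exists_maximal ⟨Γ, by simp [S, hΓ, hχ]⟩
  simp only [S, Finset.mem_filter, Finset.mem_powerset] at hΔS hmax
  obtain ⟨hΔ, hΓΔ, hΔχ⟩ := hΔS
  have hext : ∀ ψ ∈ φ.negTopClosure, ψ ∉ Δ → Derives MPCAx (insert ψ Δ) χ := by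
    intro ψ hψ hψΔ
    by_contra hψχ
    refine hψΔ (hmax ⟨Finset.insert_subset hψ hΔ, hΓΔ.trans (Finset.subset_insert _ _), ?_⟩
      (Finset.subset_insert _ _) (Finset.mem_insert_self ψ Δ))
    rwa [Finset.coe_insert]
  have hprime : IsPrimeTheory φ Δ := by
    refine ⟨hΔ, fun ψ hψ hΔψ => ?_, fun a b hab => ?_⟩
    · by_contra hψΔ
      exact hΔχ (hΔψ.cut (hext ψ hψ hψΔ))
    · obtain ⟨ha, hb⟩ := mem_negTopClosure_of_or (hΔ hab)
      by_contra! hnab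
      have hachi := (hext a ha hnab.1).deduction
      have hbchi := (hext b hb hnab.2).deduction
      exact hΔχ (.mp (.mp (.mp (.orE a b χ) hachi) hbchi) (Derives.of_mem hab))
  exact hΔχ (Derives.of_mem (h ⟨Δ, hprime⟩ hΓΔ))

namespace CanonicalWorld

variable (Γ : CanonicalWorld φ)

theorem mem_of_derives {ψ : Form} (hψ : ψ ∈ φ.negTopClosure) (h : Derives MPCAx Γ.1 ψ) :
    ψ ∈ Γ.1 :=
  Γ.2.mem_of_derives ψ hψ h

theorem top_mem : top ∈ Γ.1 :=
  Γ.mem_of_derives (top_mem_negTopClosure φ) .topI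

variable {Γ} {a b : Form}

theorem and_mem_iff (h : a.and b ∈ φ.negTopClosure) : a.and b ∈ Γ.1 ↔ a ∈ Γ.1 ∧ b ∈ Γ.1 := by
  obtain ⟨ha, hb⟩ := mem_negTopClosure_of_and h
  refine ⟨fun hab => ⟨?_, ?_⟩, fun ⟨haΓ, hbΓ⟩ => ?_⟩
  · exact Γ.mem_of_derives ha (.mp (.andE1 a b) (Derives.of_mem hab))
  · exact Γ.mem_of_derives hb (.mp (.andE2 a b) (Derives.of_mem hab))
  · exact Γ.mem_of_derives h (.mp (.mp (.andI a b) (Derives.of_mem haΓ)) (Derives.of_mem hbΓ))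

theorem or_mem_iff (h : a.or b ∈ φ.negTopClosure) : a.or b ∈ Γ.1 ↔ a ∈ Γ.1 ∨ b ∈ Γ.1 := by
  refine ⟨Γ.2.mem_or_mem a b, ?_⟩
  rintro (ha | hb)
  · exact Γ.mem_of_derives h (.mp (.orI1 a b) (Derives.of_mem ha))
  · exact Γ.mem_of_derives h (.mp (.orI2 a b) (Derives.of_mem hb))

theorem derives_insert_of_forall {χ : Form} (ha : a ∈ φ.negTopClosure)
    (h : ∀ Δ, canonicalLe Γ Δ → a ∈ Δ.1 → χ ∈ Δ.1) : Derives MPCAx (insert a Γ.1) χ := by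
  rw [← Finset.coe_insert]
  exact derives_of_forall_canonicalWorld (Finset.insert_subset ha Γ.2.subset) fun Δ hΔ =>
    h Δ ((Finset.subset_insert _ _).trans hΔ) (hΔ (Finset.mem_insert_self a _))

theorem imp_mem_iff (h : a.imp b ∈ φ.negTopClosure) :
    a.imp b ∈ Γ.1 ↔ ∀ Δ, canonicalLe Γ Δ → a ∈ Δ.1 → b ∈ Δ.1 := by
  obtain ⟨ha, hb⟩ := mem_negTopClosure_of_imp h
  refine ⟨fun hab Δ hΓΔ haΔ => ?_, fun hall => ?_⟩
  · exact Δ.mem_of_derives hb (.mp (Derives.of_mem (hΓΔ hab)) (Derives.of_mem haΔ))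
  · exact Γ.mem_of_derives h (derives_insert_of_forall ha hall).deduction

theorem neg_mem_iff (h : a.neg ∈ φ.negTopClosure) :
    a.neg ∈ Γ.1 ↔ Γ ∈ canonicalNeg {Δ | a ∈ Δ.1} := by
  refine ⟨fun hna Δ hΓΔ haΔ => ?_, fun hall => ?_⟩
  · exact Δ.mem_of_derives (neg_top_mem_negTopClosure φ)
      (Deriv.neg_top_of_neg (Derives.of_mem haΔ) (Derives.of_mem (hΓΔ hna)))
  · exact Γ.mem_of_derives h
      (derives_insert_of_forall (mem_negTopClosure_of_neg h) hall).neg_of_imp_neg_top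

end CanonicalWorld

theorem mem_sat_canonical_iff {ψ : Form} (hψ : ψ ∈ φ.negTopClosure) (Γ : CanonicalWorld φ) :
    Γ ∈ Sat canonicalLe canonicalNeg canonicalVal ψ ↔ ψ ∈ Γ.1 := by
  induction ψ generalizing Γ with
  | var p => exact Iff.rfl
  | top => simpa [Sat] using Γ.top_mem
  | and a b iha ihb =>
    obtain ⟨ha, hb⟩ := mem_negTopClosure_of_and hψ
    rw [Sat, Set.mem_inter_iff, iha ha, ihb hb, Γ.and_mem_iff hψ]
  | or a b iha ihb =>
    obtain ⟨ha, hb⟩ := mem_negTopClosure_of_or hψ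
    rw [Sat, Set.mem_union, iha ha, ihb hb, Γ.or_mem_iff hψ]
  | imp a b iha ihb =>
    obtain ⟨ha, hb⟩ := mem_negTopClosure_of_imp hψ
    simp only [Sat, Set.mem_ofPred_eq, iha ha, ihb hb]
    exact (Γ.imp_mem_iff hψ).symm
  | neg a iha =>
    rw [Sat, show Sat canonicalLe canonicalNeg canonicalVal a = {Δ | a ∈ Δ.1} from
      Set.ext (iha (mem_negTopClosure_of_neg hψ)), Γ.neg_mem_iff hψ]

theorem not_validOn_canonical (h : ¬ MPCThm φ) :
    ¬ ValidOn (canonicalLe (φ := φ)) canonicalNeg φ := by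
  intro hφ
  refine h (Derives.empty_iff.1 ?_)
  rw [← Finset.coe_empty]
  refine derives_of_forall_canonicalWorld (φ := φ) (Finset.empty_subset _) fun Δ _ => ?_
  exact (mem_sat_canonical_iff (mem_negTopClosure_self φ) Δ).1
    (hφ canonicalVal (fun _ _ _ hΓΔ hΓ => hΓΔ hΓ) Δ)

end Canonical

/-- Finite model property of minimal logic: `MPC ⊢ φ` iff `φ` is valid on every
finite N-frame validating the schema `(ψ → ¬ψ) → ¬ψ`; in particular every
non-theorem is refuted on a finite N-frame validating all theorems of `MPC`. -/
theorem stmt11 (φ : Form) :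
    (MPCThm φ ↔
      ∀ (W : Type) (le : W → W → Prop),
        (∀ w, le w w) → (∀ a b c, le a b → le b c → le a c) →
        (∀ a b, le a b → le b a → a = b) →
        ∀ N : Set W → Set W,
          (∀ X, IsUpset le X → IsUpset le (N X)) →
          (∀ X Y, IsUpset le X → IsUpset le Y → N X ∩ Y = N (X ∩ Y) ∩ Y) →
          Finite W →
          (∀ ψ : Form, ValidOn le N ((ψ.imp ψ.neg).imp ψ.neg)) →
          ValidOn le N φ) ∧
    (¬ MPCThm φ →
      ∃ (W : Type) (le : W → W → Prop) (N : Set W → Set W),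
        (∀ w, le w w) ∧ (∀ a b c, le a b → le b c → le a c) ∧
        (∀ a b, le a b → le b a → a = b) ∧
        (∀ X, IsUpset le X → IsUpset le (N X)) ∧
        (∀ X Y, IsUpset le X → IsUpset le Y → N X ∩ Y = N (X ∩ Y) ∩ Y) ∧
        Finite W ∧
        (∀ ψ : Form, MPCThm ψ → ValidOn le N ψ) ∧
        ¬ ValidOn le N φ) := by
  have hNcan : ∀ X, IsUpset (canonicalLe (φ := φ)) X → IsUpset canonicalLe (canonicalNeg X) :=
    fun X _ => isUpset_canonicalNeg X
  have hlocCan : ∀ X Y, IsUpset (canonicalLe (φ := φ)) X → IsUpset canonicalLe Y →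
      canonicalNeg X ∩ Y = canonicalNeg (X ∩ Y) ∩ Y :=
    fun X Y _ hY => canonicalNeg_inter X Y hY
  refine ⟨⟨fun h W le hrefl htrans _ N hN hloc _ hschema =>
      MPCThm.validOn hrefl htrans hN hloc hschema h, fun hvalid => ?_⟩, fun h => ?_⟩
  · by_contra h
    exact not_validOn_canonical h (hvalid _ _ canonicalLe_refl canonicalLe_trans
      canonicalLe_antisymm _ hNcan hlocCan inferInstance validOn_canonical_mpcAx)
  · exact ⟨CanonicalWorld φ, canonicalLe, canonicalNeg, canonicalLe_refl, canonicalLe_trans,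
      canonicalLe_antisymm, hNcan, hlocCan, inferInstance, fun ψ hψ =>
      MPCThm.validOn canonicalLe_refl canonicalLe_trans hNcan hlocCan validOn_canonical_mpcAx hψ,
      not_validOn_canonical h⟩
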